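/- arXiv:1605.08656 — 2 statements merged into one kernel-verified Lean document; each statement's English description precedes it below -/
import Mathlib

section
/- Rank of the differential of a slice regular function: let f : Ω_D → ℍ be slice regular with continuously differentiable stem components, and let x₀ = α + Jβ ∈ Ω_D with β > 0, J ∈ 𝕊. (i) If ∂_s f(x₀) = 0 and (∂f/∂x)(x₀) ≠ 0, then the real Fréchet derivative (df)_{x₀} : ℍ → ℍ has rank 2. (ii) If ∂_s f(x₀) = 0 and (∂f/∂x)(x₀) = 0, then (df)_{x₀} = 0. (iii) If ∂_s f(x₀) ≠ 0, then (df)_{x₀} is not invertible if and only if (∂f/∂x)(x₀)·(∂_s f(x₀))⁻¹ lies in the orthogonal complement of ℂ_J = ℝ + ℝJ in ℍ ≅ ℝ⁴. -/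
/-!
Near a nonreal point, `f y = F₁ (sliceCoord y) + sliceUnit y * F₂ (sliceCoord y)`, where
`sliceCoord y = Re y + i‖Im y‖` and `sliceUnit y = Im y / ‖Im y‖`. The derivative of `sliceUnit`
at `x₀` is `‖Im x₀‖⁻¹ (v - P v)`, with `P` the orthogonal projection onto `ℂ_J = complexSlice J`,
so the chain rule and the Cauchy–Riemann equations give
`(df)ₓ₀ v = P v * ∂f/∂x(x₀) + (v - P v) * ∂ₛf(x₀)`. Parts (i) and (ii) are read off this formula.
For (iii) write `(df)ₓ₀ v = (P v * c + (v - P v)) * ∂ₛf(x₀)` with `c = ∂f/∂x(x₀) ∂ₛf(x₀)⁻¹`: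
since `ℂ_J` is closed under inverses and `ℂ_Jᗮ` under left multiplication by `ℂ_J`, a nonzero
kernel vector `v` forces `c = (P v)⁻¹ (P v * c) ∈ ℂ_Jᗮ`; conversely, if `c ∈ ℂ_Jᗮ` then `1 - c`
is in the kernel.
-/

open Quaternion RealInnerProductSpace Topology

namespace Quaternion

variable {J : ℍ}

lemma re_eq_zero_of_sq_eq_neg_one (hJ : J ^ 2 = -1) : J.re = 0 := by
  have h := congrArg (fun q : ℍ => (q.re, q.imI, q.imJ, q.imK)) hJ
  simp only [sq, re_mul, imI_mul, imJ_mul, imK_mul, re_neg, imI_neg, imJ_neg, imK_neg, re_one,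
    imI_one, imJ_one, imK_one, Prod.mk.injEq] at h
  nlinarith [sq_nonneg J.re, sq_nonneg J.imI, sq_nonneg J.imJ, sq_nonneg J.imK]

lemma normSq_eq_one_of_sq_eq_neg_one (hJ : J ^ 2 = -1) : normSq J = 1 := by
  have h := sq_eq_neg_normSq.mpr (re_eq_zero_of_sq_eq_neg_one hJ)
  rw [hJ, neg_inj] at h
  exact coe_injective h.symm

lemma norm_eq_one_of_sq_eq_neg_one (hJ : J ^ 2 = -1) : ‖J‖ = 1 := by
  have h := normSq_eq_norm_mul_self J
  rw [normSq_eq_one_of_sq_eq_neg_one hJ] at h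
  nlinarith [norm_nonneg J]

lemma ne_zero_of_sq_eq_neg_one (hJ : J ^ 2 = -1) : J ≠ 0 := by
  rintro rfl
  norm_num at hJ

lemma star_eq_neg_of_sq_eq_neg_one (hJ : J ^ 2 = -1) : star J = -J :=
  star_eq_neg.mpr (re_eq_zero_of_sq_eq_neg_one hJ)

lemma inner_one_left (u : ℍ) : ⟪1, u⟫ = u.re := by
  simp [inner_def]

lemma inner_self_mul (a u : ℍ) : ⟪a, a * u⟫ = normSq a * u.re := by
  simp only [inner_def, normSq_def', star_mul, re_mul, imI_mul, imJ_mul, imK_mul, re_star,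
    imI_star, imJ_star, imK_star]
  ring

lemma re_mul_add_inner (a u : ℍ) : (a * u).re + ⟪a, u⟫ = 2 * a.re * u.re := by
  simp only [inner_def, re_mul, re_star, imI_star, imJ_star, imK_star]
  ring

lemma inner_one_smul_one_add_im (v : ℍ) : ⟪1, v⟫ • 1 + v.im = v := by
  ext <;> simp [inner_one_left]

lemma inner_im_im (a b : ℍ) : ⟪a.im, b.im⟫ = ⟪a.im, b⟫ := by
  simp [inner_def, re_mul]
  ring

noncomputable def imCLM : ℍ →L[ℝ] ℍ :=
  LinearMap.toContinuousLinearMap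
    { toFun := Quaternion.im
      map_add' := im_add
      map_smul' := fun r a ↦ im_smul a r }

end Quaternion

lemma Submodule.mem_orthogonal_span_pair {𝕜 E : Type*} [RCLike 𝕜] [NormedAddCommGroup E]
    [InnerProductSpace 𝕜 E] {a b u : E} :
    u ∈ (span 𝕜 {a, b})ᗮ ↔ inner 𝕜 a u = 0 ∧ inner 𝕜 b u = 0 := by
  refine ⟨fun h ↦ ⟨h a (subset_span (by simp)), h b (subset_span (by simp))⟩, ?_⟩
  rintro ⟨ha, hb⟩ w hw
  obtain ⟨s, t, rfl⟩ := mem_span_pair.mp hw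
  simp [inner_add_left, inner_smul_left, ha, hb]

noncomputable def complexSlice (J : ℍ) : Submodule ℝ ℍ := Submodule.span ℝ {1, J}

namespace complexSlice

variable {J : ℍ}

lemma one_mem : (1 : ℍ) ∈ complexSlice J := Submodule.subset_span (by simp)

lemma mem_iff {w : ℍ} : w ∈ complexSlice J ↔ ∃ a b : ℝ, a • 1 + b • J = w :=
  Submodule.mem_span_pair

lemma mem_orthogonal_iff {u : ℍ} : u ∈ (complexSlice J)ᗮ ↔ u.re = 0 ∧ ⟪J, u⟫ = 0 := by
  rw [complexSlice, Submodule.mem_orthogonal_span_pair, inner_one_left]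

lemma starProjection_apply (hJ : J ^ 2 = -1) (v : ℍ) :
    (complexSlice J).starProjection v = ⟪1, v⟫ • 1 + ⟪J, v⟫ • J := by
  refine Submodule.eq_starProjection_of_mem_orthogonal (mem_iff.mpr ⟨_, _, rfl⟩) ?_
  have hJ1 : ⟪J, 1⟫ = 0 := by rw [real_inner_comm, inner_one_left, re_eq_zero_of_sq_eq_neg_one hJ]
  rw [mem_orthogonal_iff]
  constructor
  · simp [inner_one_left, re_eq_zero_of_sq_eq_neg_one hJ]
  · simp [inner_sub_right, inner_add_right, real_inner_smul_right, hJ1,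
      norm_eq_one_of_sq_eq_neg_one hJ]

lemma finrank_eq_two (hJ : J ^ 2 = -1) : Module.finrank ℝ (complexSlice J) = 2 := by
  have hli : LinearIndependent ℝ ![(1 : ℍ), J] := by
    refine LinearIndependent.pair_iff.mpr fun s t hst ↦ ?_
    have hs : s = 0 := by
      simpa [re_eq_zero_of_sq_eq_neg_one hJ] using congrArg QuaternionAlgebra.re hst
    subst hs
    simpa [ne_zero_of_sq_eq_neg_one hJ] using hst
  rw [complexSlice, ← Matrix.range_cons_cons_empty _ _ ![], finrank_span_eq_card hli]
  simp

lemma star_mem {w : ℍ} (hJ : J ^ 2 = -1) (hw : w ∈ complexSlice J) : star w ∈ complexSlice J := by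
  obtain ⟨a, b, rfl⟩ := mem_iff.mp hw
  exact mem_iff.mpr ⟨a, -b, by simp [star_eq_neg_of_sq_eq_neg_one hJ]⟩

lemma inv_mem {w : ℍ} (hJ : J ^ 2 = -1) (hw : w ∈ complexSlice J) : w⁻¹ ∈ complexSlice J := by
  rw [inv_def]
  exact Submodule.smul_mem _ _ (star_mem hJ hw)

lemma mul_mem_orthogonal {w u : ℍ} (hJ : J ^ 2 = -1) (hw : w ∈ complexSlice J)
    (hu : u ∈ (complexSlice J)ᗮ) : w * u ∈ (complexSlice J)ᗮ := by
  induction hw using Submodule.span_induction with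
  | mem x hx =>
    rcases hx with rfl | rfl
    · rwa [one_mul]
    · rw [mem_orthogonal_iff] at hu ⊢
      have h := re_mul_add_inner x u
      rw [re_eq_zero_of_sq_eq_neg_one hJ] at h
      rw [inner_self_mul, normSq_eq_one_of_sq_eq_neg_one hJ]
      constructor <;> linarith [hu.1, hu.2]
  | zero => simp
  | add x y _ _ hx hy => rw [add_mul]; exact Submodule.add_mem _ hx hy
  | smul r x _ hx => rw [smul_mul_assoc]; exact Submodule.smul_mem _ _ hx

lemma exists_ne_zero_starProjection_mul_add_eq_zero_iff (hJ : J ^ 2 = -1) (c : ℍ) :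
    (∃ v ≠ 0, (complexSlice J).starProjection v * c + (v - (complexSlice J).starProjection v) = 0)
      ↔ c ∈ (complexSlice J)ᗮ := by
  set K := complexSlice J
  constructor
  · rintro ⟨v, hv, hMv⟩
    have hPv : K.starProjection v ≠ 0 := by
      intro h
      rw [h, zero_mul, zero_add, sub_zero] at hMv
      exact hv hMv
    have hPvc : K.starProjection v * c ∈ Kᗮ := by
      rw [eq_neg_of_add_eq_zero_left hMv]
      exact Kᗮ.neg_mem (K.sub_starProjection_mem_orthogonal v)
    rw [← inv_mul_cancel_left₀ hPv c]
    exact mul_mem_orthogonal hJ (inv_mem hJ (K.starProjection_apply_mem v)) hPvc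
  · intro hc
    have hPc : K.starProjection (1 - c) = 1 := by
      rw [map_sub, K.starProjection_apply_eq_zero_iff.mpr hc, sub_zero,
        Submodule.starProjection_eq_self_iff.mpr one_mem]
    refine ⟨1 - c, fun h ↦ ?_, by rw [hPc, one_mul, sub_sub_cancel_left, add_neg_cancel]⟩
    have h1 : (1 : ℍ) ∈ Kᗮ := sub_eq_zero.mp h ▸ hc
    simpa using Submodule.inner_right_of_mem_orthogonal one_mem h1

end complexSlice

noncomputable def sliceDifferential (J d s : ℍ) : ℍ →L[ℝ] ℍ :=
  LinearMap.toContinuousLinearMap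
    (LinearMap.mulRight ℝ d ∘ₗ (complexSlice J).starProjection.toLinearMap +
      LinearMap.mulRight ℝ s ∘ₗ (LinearMap.id - (complexSlice J).starProjection.toLinearMap))

lemma sliceDifferential_apply (J d s v : ℍ) : sliceDifferential J d s v =
    (complexSlice J).starProjection v * d + (v - (complexSlice J).starProjection v) * s := rfl

section sliceDifferential

variable {J : ℍ}

lemma sliceDifferential_zero_zero : sliceDifferential J 0 0 = 0 := by
  ext1 v
  simp [sliceDifferential_apply]

lemma finrank_range_sliceDifferential (hJ : J ^ 2 = -1) {d : ℍ} (hd : d ≠ 0) :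
    Module.finrank ℝ (LinearMap.range (sliceDifferential J d 0 : ℍ →ₗ[ℝ] ℍ)) = 2 := by
  have hL : (sliceDifferential J d 0 : ℍ →ₗ[ℝ] ℍ) =
      LinearMap.mulRight ℝ d ∘ₗ (complexSlice J).starProjection.toLinearMap := by
    ext1 v
    simp [sliceDifferential_apply]
  rw [hL, LinearMap.range_comp, Submodule.range_starProjection,
    ← (Submodule.equivMapOfInjective _ (mul_left_injective₀ hd) _).finrank_eq,
    complexSlice.finrank_eq_two hJ]

lemma not_bijective_sliceDifferential_iff (hJ : J ^ 2 = -1) (d : ℍ) {s : ℍ} (hs : s ≠ 0) :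
    ¬ Function.Bijective (sliceDifferential J d s) ↔ d * s⁻¹ ∈ (complexSlice J)ᗮ := by
  have hL : ∀ v, sliceDifferential J d s v = ((complexSlice J).starProjection v * (d * s⁻¹) +
      (v - (complexSlice J).starProjection v)) * s := fun v ↦ by
    rw [sliceDifferential_apply, add_mul, mul_assoc, mul_assoc, inv_mul_cancel₀ hs, mul_one]
  have hbij : Function.Bijective (sliceDifferential J d s) ↔
      Function.Injective (sliceDifferential J d s : ℍ →ₗ[ℝ] ℍ) :=
    ⟨(·.1), fun h ↦ ⟨h, LinearMap.injective_iff_surjective.mp h⟩⟩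
  rw [hbij, injective_iff_map_eq_zero,
    ← complexSlice.exists_ne_zero_starProjection_mul_add_eq_zero_iff hJ]
  push Not
  simp only [ContinuousLinearMap.coe_coe, hL, mul_eq_zero, hs, or_false]
  exact exists_congr fun v ↦ and_comm

end sliceDifferential

noncomputable def sliceCoord (x : ℍ) : ℂ := ⟨x.re, ‖x.im‖⟩

noncomputable def sliceUnit (x : ℍ) : ℍ := ‖x.im‖⁻¹ • x.im

section SliceCoordinates

variable {x : ℍ}

@[simp] lemma sliceCoord_re (x : ℍ) : (sliceCoord x).re = x.re := rfl

@[simp] lemma sliceCoord_im (x : ℍ) : (sliceCoord x).im = ‖x.im‖ := rfl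

lemma sliceUnit_sq (hx : x.im ≠ 0) : sliceUnit x ^ 2 = -1 := by
  have hn : ‖x.im‖ ≠ 0 := norm_ne_zero_iff.mpr hx
  rw [sliceUnit, smul_pow, im_sq, normSq_eq_norm_mul_self, smul_neg, smul_coe]
  field_simp
  simp

lemma sliceCoord_re_add_sliceUnit_mul (hx : x.im ≠ 0) :
    ((sliceCoord x).re : ℍ) + sliceUnit x * ((sliceCoord x).im : ℍ) = x := by
  rw [sliceCoord_re, sliceCoord_im, sliceUnit, mul_coe_eq_smul, smul_smul,
    mul_inv_cancel₀ (norm_ne_zero_iff.mpr hx), one_smul, re_add_im]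

lemma continuous_sliceCoord : Continuous sliceCoord :=
  Complex.equivRealProdCLM.symm.continuous.comp (continuous_re.prodMk continuous_im.norm)

lemma eventuallyEq_stem_sliceCoord {D : Set ℂ} (hD : IsOpen D) {F₁ F₂ : ℂ → ℍ} {f : ℍ → ℍ}
    (hslice : ∀ z ∈ D, ∀ I : ℍ, I ^ 2 = -1 → f (z.re + I * z.im) = F₁ z + I * F₂ z)
    (hx : x.im ≠ 0) (hxD : sliceCoord x ∈ D) :
    f =ᶠ[𝓝 x] fun y ↦ F₁ (sliceCoord y) + sliceUnit y * F₂ (sliceCoord y) := by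
  have hU : IsOpen {y : ℍ | y.im ≠ 0 ∧ sliceCoord y ∈ D} :=
    (isOpen_ne_fun continuous_im continuous_const).inter (hD.preimage continuous_sliceCoord)
  filter_upwards [hU.mem_nhds ⟨hx, hxD⟩] with y ⟨hy, hyD⟩
  calc f y = f ((sliceCoord y).re + sliceUnit y * (sliceCoord y).im) := by
        rw [sliceCoord_re_add_sliceUnit_mul hy]
    _ = _ := hslice _ hyD _ (sliceUnit_sq hy)

end SliceCoordinates

section SlicePoint

variable {J : ℍ} {z : ℂ}

lemma im_coe_add_mul_coe (hJ : J ^ 2 = -1) (a b : ℝ) : ((a : ℍ) + J * b).im = b • J := by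
  ext <;> simp [mul_coe_eq_smul, re_eq_zero_of_sq_eq_neg_one hJ]

lemma sliceCoord_coe_add_mul_coe (hJ : J ^ 2 = -1) (hz : 0 < z.im) :
    sliceCoord ((z.re : ℍ) + J * z.im) = z := by
  apply Complex.ext
  · simp [mul_coe_eq_smul, re_eq_zero_of_sq_eq_neg_one hJ]
  · simp [im_coe_add_mul_coe hJ, norm_smul, norm_eq_one_of_sq_eq_neg_one hJ, hz.le]

lemma sliceUnit_coe_add_mul_coe (hJ : J ^ 2 = -1) (hz : 0 < z.im) :
    sliceUnit ((z.re : ℍ) + J * z.im) = J := by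
  rw [sliceUnit, im_coe_add_mul_coe hJ, norm_smul, norm_eq_one_of_sq_eq_neg_one hJ, mul_one,
    Real.norm_of_nonneg hz.le, smul_smul, inv_mul_cancel₀ hz.ne', one_smul]

end SlicePoint

section SliceDerivatives

variable {x : ℍ}

lemma hasFDerivAt_norm_im (hx : x.im ≠ 0) :
    HasFDerivAt (fun y : ℍ ↦ ‖y.im‖) (innerSL ℝ (sliceUnit x)) x := by
  have hsq := imCLM.hasFDerivAt.norm_sq (x := x)
  have hpos : ‖imCLM x‖ ^ 2 ≠ 0 := pow_ne_zero 2 (norm_ne_zero_iff.mpr hx)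
  refine ((hsq.sqrt hpos).congr_of_eventuallyEq ?_).congr_fderiv ?_
  · exact Filter.Eventually.of_forall fun y ↦ (Real.sqrt_sq (norm_nonneg _)).symm
  · ext v
    simp [Real.sqrt_sq (norm_nonneg _), sliceUnit, imCLM, inner_im_im]
    ring

lemma hasFDerivAt_sliceCoord (hx : x.im ≠ 0) :
    HasFDerivAt sliceCoord
      ((innerSL ℝ 1).smulRight 1 + (innerSL ℝ (sliceUnit x)).smulRight Complex.I) x := by
  have hcoord : sliceCoord = fun y ↦ ⟪1, y⟫ • (1 : ℂ) + ‖y.im‖ • Complex.I := by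
    funext y
    apply Complex.ext <;> simp [inner_one_left]
  rw [hcoord]
  exact ((innerSL ℝ (1 : ℍ)).hasFDerivAt.smul_const 1).add
    ((hasFDerivAt_norm_im hx).smul_const Complex.I)

lemma hasFDerivAt_sliceUnit (hx : x.im ≠ 0) :
    HasFDerivAt sliceUnit
      (‖x.im‖⁻¹ • (ContinuousLinearMap.id ℝ ℍ - (complexSlice (sliceUnit x)).starProjection))
      x := by
  have hn : ‖x.im‖ ≠ 0 := norm_ne_zero_iff.mpr hx
  have hinv := (hasDerivAt_inv hn).comp_hasFDerivAt x (hasFDerivAt_norm_im hx)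
  refine (hinv.smul imCLM.hasFDerivAt).congr_fderiv (ContinuousLinearMap.ext fun v ↦ ?_)
  show ‖x.im‖⁻¹ • v.im + (-(‖x.im‖ ^ 2)⁻¹ * ⟪sliceUnit x, v⟫) • x.im =
    ‖x.im‖⁻¹ • (v - (complexSlice (sliceUnit x)).starProjection v)
  have hv : v - ⟪1, v⟫ • 1 = v.im := by rw [sub_eq_iff_eq_add', inner_one_smul_one_add_im]
  rw [complexSlice.starProjection_apply (sliceUnit_sq hx), sub_add_eq_sub_sub, hv, sliceUnit]
  match_scalars <;> field_simp

end SliceDerivatives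

lemma apply_add_mul_apply_eq_of_cauchyRiemann {J : ℍ} (hJ : J ^ 2 = -1) {A₁ A₂ : ℂ →L[ℝ] ℍ}
    (h₁ : A₁ 1 = A₂ Complex.I) (h₂ : A₁ Complex.I = -A₂ 1) (a b : ℝ) :
    A₁ (a • 1 + b • Complex.I) + J * A₂ (a • 1 + b • Complex.I) =
      (a • 1 + b • J) * (A₁ 1 + J * A₂ 1) := by
  have hJJ : ∀ q : ℍ, J * (J * q) = -q := fun q ↦ by rw [← mul_assoc, ← sq, hJ, neg_one_mul]
  simp only [map_add, map_smul, h₂, ← h₁, mul_add, add_mul, mul_smul_comm, smul_mul_assoc, one_mul,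
    hJJ]
  module

noncomputable def sphericalDerivative (f : ℍ → ℍ) (x : ℍ) : ℍ :=
  (2 : ℝ)⁻¹ • ((x.im)⁻¹ * (f x - f (star x)))

lemma sphericalDerivative_coe_add_mul_coe {J : ℍ} (hJ : J ^ 2 = -1) {z : ℂ} (hz : z.im ≠ 0)
    {f : ℍ → ℍ} {F₁ F₂ : ℂ → ℍ}
    (hslice : ∀ I : ℍ, I ^ 2 = -1 → f (z.re + I * z.im) = F₁ z + I * F₂ z) :
    sphericalDerivative f ((z.re : ℍ) + J * z.im) = z.im⁻¹ • F₂ z := by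
  have hstar : star ((z.re : ℍ) + J * z.im) = (z.re : ℍ) + (-J) * z.im := by
    simp [mul_coe_eq_smul, star_eq_neg_of_sq_eq_neg_one hJ]
  have hinv : (z.im • J)⁻¹ = z.im⁻¹ • -J := by
    refine inv_eq_of_mul_eq_one_right ?_
    rw [smul_mul_smul_comm, mul_inv_cancel₀ hz, one_smul, mul_neg, ← sq, hJ, neg_neg]
  rw [sphericalDerivative, hstar, hslice J hJ, hslice (-J) (by rw [neg_sq, hJ]),
    im_coe_add_mul_coe hJ, hinv]
  have hJJ : J * (J * F₂ z) = -F₂ z := by rw [← mul_assoc, ← sq, hJ, neg_one_mul]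
  simp only [neg_mul, sub_neg_eq_add, add_sub_add_left_eq_sub, smul_mul_assoc, mul_add, hJJ]
  module

theorem hasFDerivAt_sliceDifferential {D : Set ℂ} (hD : IsOpen D) {F₁ F₂ : ℂ → ℍ} {f : ℍ → ℍ}
    (hslice : ∀ z ∈ D, ∀ I : ℍ, I ^ 2 = -1 → f (z.re + I * z.im) = F₁ z + I * F₂ z)
    {A₁ A₂ : ℂ →L[ℝ] ℍ} (h₁ : A₁ 1 = A₂ Complex.I) (h₂ : A₁ Complex.I = -A₂ 1)
    {x : ℍ} (hx : x.im ≠ 0) (hxD : sliceCoord x ∈ D)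
    (hF₁ : HasFDerivAt F₁ A₁ (sliceCoord x)) (hF₂ : HasFDerivAt F₂ A₂ (sliceCoord x)) :
    HasFDerivAt f (sliceDifferential (sliceUnit x) (A₁ 1 + sliceUnit x * A₂ 1)
      (‖x.im‖⁻¹ • F₂ (sliceCoord x))) x := by
  have hζ := hasFDerivAt_sliceCoord hx
  have hchain := (hF₁.comp x hζ).add ((hasFDerivAt_sliceUnit hx).mul' (hF₂.comp x hζ))
  refine (hchain.congr_of_eventuallyEq (eventuallyEq_stem_sliceCoord hD hslice hx hxD)).congr_fderiv
    (ContinuousLinearMap.ext fun v ↦ ?_)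
  have hCR :=
    apply_add_mul_apply_eq_of_cauchyRiemann (sliceUnit_sq hx) h₁ h₂ ⟪1, v⟫ ⟪sliceUnit x, v⟫
  rw [← complexSlice.starProjection_apply (sliceUnit_sq hx)] at hCR
  rw [sliceDifferential_apply, ← hCR, mul_smul_comm, ← smul_mul_assoc, add_assoc]
  rfl

theorem differential_rank_general
    (D : Set ℂ) (hDopen : IsOpen D)
    (F₁ F₂ : ℂ → Quaternion ℝ)
    (f : Quaternion ℝ → Quaternion ℝ)
    (hslice : ∀ z ∈ D, ∀ I : Quaternion ℝ, I ^ 2 = -1 →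
      f ((z.re : Quaternion ℝ) + I * (z.im : Quaternion ℝ)) = F₁ z + I * F₂ z)
    (D₁ D₂ : ℂ → (ℂ →L[ℝ] Quaternion ℝ))
    (hF₁ : ∀ z ∈ D, HasFDerivAt F₁ (D₁ z) z)
    (hF₂ : ∀ z ∈ D, HasFDerivAt F₂ (D₂ z) z)
    (hCR : ∀ z ∈ D, D₁ z 1 = D₂ z Complex.I ∧ D₁ z Complex.I = - D₂ z 1)
    (z : ℂ) (hz : z ∈ D) (hβ : 0 < z.im)
    (J : Quaternion ℝ) (hJ : J ^ 2 = -1)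
    (x₀ : Quaternion ℝ)
    (hx₀ : x₀ = (z.re : Quaternion ℝ) + J * (z.im : Quaternion ℝ))
    (sph sld : Quaternion ℝ)
    (hsph : sph = (2 : ℝ)⁻¹ • ((Quaternion.im x₀)⁻¹ * (f x₀ - f (star x₀))))
    (hsld : sld = D₁ z 1 + J * (D₂ z 1)) :
    ∃ L : Quaternion ℝ →L[ℝ] Quaternion ℝ,
      HasFDerivAt f L x₀ ∧
      (sph = 0 → sld ≠ 0 →
        Module.finrank ℝ (LinearMap.range (L : Quaternion ℝ →ₗ[ℝ] Quaternion ℝ)) = 2) ∧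
      (sph = 0 → sld = 0 → L = 0) ∧
      (sph ≠ 0 →
        (¬ Function.Bijective L ↔
          sld * sph⁻¹ ∈ (Submodule.span ℝ ({1, J} : Set (Quaternion ℝ)))ᗮ)) := by
  have hζ : sliceCoord x₀ = z := hx₀ ▸ sliceCoord_coe_add_mul_coe hJ hβ
  have hI : sliceUnit x₀ = J := hx₀ ▸ sliceUnit_coe_add_mul_coe hJ hβ
  have hx₀im : x₀.im ≠ 0 := by
    rw [hx₀, im_coe_add_mul_coe hJ]
    exact smul_ne_zero hβ.ne' (ne_zero_of_sq_eq_neg_one hJ)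
  have hsph' : sph = z.im⁻¹ • F₂ z := by
    rw [hsph, ← sphericalDerivative, hx₀]
    exact sphericalDerivative_coe_add_mul_coe hJ hβ.ne' (hslice z hz)
  refine ⟨sliceDifferential J sld sph, ?_, fun h0 hne ↦ ?_, fun h0 h0' ↦ ?_,
    not_bijective_sliceDifferential_iff hJ sld⟩
  · have hf := hasFDerivAt_sliceDifferential hDopen hslice (hCR z hz).1 (hCR z hz).2 hx₀im
      (hζ ▸ hz) (hζ ▸ hF₁ z hz) (hζ ▸ hF₂ z hz)
    rwa [hI, ← sliceCoord_im, hζ, ← hsld, ← hsph'] at hf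
  · rw [h0]
    exact finrank_range_sliceDifferential hJ hne
  · rw [h0, h0']
    exact sliceDifferential_zero_zero

/-- **Rank of the differential of a slice regular function** at a nonreal point
`x₀ = α + Jβ`:
(i) if `∂ₛf(x₀) = 0` and `∂f/∂x(x₀) ≠ 0` then `(df)ₓ₀` has rank 2;
(ii) if `∂ₛf(x₀) = 0` and `∂f/∂x(x₀) = 0` then `(df)ₓ₀ = 0`;
(iii) if `∂ₛf(x₀) ≠ 0` then `(df)ₓ₀` is not invertible iff
`∂f/∂x(x₀)·(∂ₛf(x₀))⁻¹ ⊥ ℂ_J`. -/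
theorem differential_rank
    (D : Set ℂ) (hDopen : IsOpen D)
    (hDsymm : ∀ z ∈ D, (starRingEnd ℂ) z ∈ D)
    (F₁ F₂ : ℂ → Quaternion ℝ)
    (hstem : ∀ z ∈ D,
      F₁ ((starRingEnd ℂ) z) = F₁ z ∧ F₂ ((starRingEnd ℂ) z) = - F₂ z)
    (f : Quaternion ℝ → Quaternion ℝ)
    (hslice : ∀ z ∈ D, ∀ I : Quaternion ℝ, I ^ 2 = -1 →
      f ((z.re : Quaternion ℝ) + I * (z.im : Quaternion ℝ)) = F₁ z + I * F₂ z)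
    (D₁ D₂ : ℂ → (ℂ →L[ℝ] Quaternion ℝ))
    (hF₁ : ∀ z ∈ D, HasFDerivAt F₁ (D₁ z) z)
    (hF₂ : ∀ z ∈ D, HasFDerivAt F₂ (D₂ z) z)
    (hC1 : ContinuousOn D₁ D ∧ ContinuousOn D₂ D)
    (hCR : ∀ z ∈ D, D₁ z 1 = D₂ z Complex.I ∧ D₁ z Complex.I = - D₂ z 1)
    (z : ℂ) (hz : z ∈ D) (hβ : 0 < z.im)
    (J : Quaternion ℝ) (hJ : J ^ 2 = -1)
    (x₀ : Quaternion ℝ)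
    (hx₀ : x₀ = (z.re : Quaternion ℝ) + J * (z.im : Quaternion ℝ))
    (sph sld : Quaternion ℝ)
    (hsph : sph = (2 : ℝ)⁻¹ • ((Quaternion.im x₀)⁻¹ * (f x₀ - f (star x₀))))
    (hsld : sld = D₁ z 1 + J * (D₂ z 1)) :
    ∃ L : Quaternion ℝ →L[ℝ] Quaternion ℝ,
      HasFDerivAt f L x₀ ∧
      (sph = 0 → sld ≠ 0 →
        Module.finrank ℝ (LinearMap.range (L : Quaternion ℝ →ₗ[ℝ] Quaternion ℝ)) = 2) ∧
      (sph = 0 → sld = 0 → L = 0) ∧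
      (sph ≠ 0 →
        (¬ Function.Bijective L ↔
          sld * sph⁻¹ ∈ (Submodule.span ℝ ({1, J} : Set (Quaternion ℝ)))ᗮ)) :=
  differential_rank_general D hDopen F₁ F₂ f hslice D₁ D₂ hF₁ hF₂ hCR z hz hβ J hJ x₀ hx₀ sph sld
    hsph hsld
end

section
/- A slice regular function whose twistor lift lies on the quadratic cone X₁² = X₂X₃: define f : ℍ∖ℝ → ℍ by f(α + Iβ) = (1/2)·(1 + I·i)·((α − iβ) − (α − iβ)⁻¹·j) for α, β ∈ ℝ with β > 0 and I ∈ 𝕊, where α − iβ is a quaternion in the real span of {1, i}. Then f is a slice regular function, and for every u in the real span of {1, i}, with I = (1 + u·j)⁻¹·i·(1 + u·j) and v = α + iβ (β > 0), one has the identity (1 + u·j)·f(α + Iβ) = u·v⁻¹ + (u·v)·j; in particular the lifted point with homogeneous coordinates (X₀, X₁, X₂, X₃) = (1, u, u·v⁻¹, u·v) satisfies X₁² = X₂·X₃. -/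
/-- The quaternion imaginary unit `i`. -/
noncomputable def qi : Quaternion ℝ := ⟨0, 1, 0, 0⟩

/-- The quaternion imaginary unit `j`. -/
noncomputable def qj : Quaternion ℝ := ⟨0, 0, 1, 0⟩

/-!
Complex numbers sit in `ℍ` as the real span of `1, i`. On the upper half-plane
`f(α + Iβ) = F(z) + I·(i·F(z))` with `F(z) = ½(z̄ - z̄⁻¹ j)`. The real derivative of `F` at `z`
is `t ↦ t̄·m` for some quaternion `m`, so `F` is antiholomorphic for left multiplication by `i`,
which is exactly the Cauchy-Riemann system for the pair `(F, i·F)`. Extending `F` evenly and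
`i·F` oddly across the real axis gives a stem function on `ℂ ∖ ℝ`.

For the lift put `P = 1 + u j`. As `u` commutes with `i` and `i j i = j`, `P + i P i = 2 u j`,
so `P · ½(1 + P⁻¹ i P · i) = u j`. Moving `j` past a complex number conjugates it, which turns
`u j (v̄ - v̄⁻¹ j)` into `u v⁻¹ + (u v) j`; the cone equation holds because `u` and `v` commute.
-/

open scoped Quaternion ComplexConjugate Topology
open Quaternion

theorem smul_one_add_mul_mul {A : Type*} [Ring A] [Algebra ℝ A] (r : ℝ) (I q S : A) :
    r • ((1 + I * q) * S) = r • S + I * (q * (r • S)) := by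
  rw [add_mul, one_mul, smul_add, mul_smul_comm, mul_smul_comm, mul_assoc]

theorem mul_smul_one_add_conj_mul {A : Type*} [DivisionRing A] [Algebra ℝ A] {P : A}
    (hP : P ≠ 0) (r : ℝ) (q S : A) :
    P * (r • ((1 + P⁻¹ * q * P * q) * S)) = r • ((P + q * P * q) * S) := by
  rw [mul_smul_comm, ← mul_assoc, mul_add, mul_one, ← mul_assoc, ← mul_assoc, ← mul_assoc,
    mul_inv_cancel₀ hP, one_mul]

theorem Commute.sq_eq_mul_inv_mul_mul {K : Type*} [DivisionRing K] {u v : K} (h : Commute u v)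
    (hv : v ≠ 0) : u ^ 2 = u * v⁻¹ * (u * v) := by
  calc u ^ 2 = u * (u * v⁻¹ * v) := by rw [inv_mul_cancel_right₀ hv, sq]
    _ = u * (v⁻¹ * u * v) := by rw [h.inv_right₀.eq]
    _ = u * v⁻¹ * (u * v) := by simp only [mul_assoc]

section Extension

variable {E : Type*} (G : ℂ → E)

noncomputable def evenExtend (z : ℂ) : E := if 0 < z.im then G z else G (conj z)

noncomputable def oddExtend [Neg E] (z : ℂ) : E := if 0 < z.im then G z else -G (conj z)

variable {G} {z : ℂ}

theorem evenExtend_of_pos (hz : 0 < z.im) : evenExtend G z = G z := if_pos hz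

theorem evenExtend_of_neg (hz : z.im < 0) : evenExtend G z = G (conj z) := if_neg hz.not_gt

theorem oddExtend_of_pos [Neg E] (hz : 0 < z.im) : oddExtend G z = G z := if_pos hz

theorem oddExtend_of_neg [Neg E] (hz : z.im < 0) : oddExtend G z = -G (conj z) :=
  if_neg hz.not_gt

theorem evenExtend_conj (hz : z.im ≠ 0) : evenExtend G (conj z) = evenExtend G z := by
  rcases hz.lt_or_gt with hz | hz
  · rw [evenExtend_of_pos (by simpa using hz), evenExtend_of_neg hz]
  · rw [evenExtend_of_neg (by simpa using hz), evenExtend_of_pos hz, Complex.conj_conj]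

theorem oddExtend_conj [InvolutiveNeg E] (hz : z.im ≠ 0) :
    oddExtend G (conj z) = -oddExtend G z := by
  rcases hz.lt_or_gt with hz | hz
  · rw [oddExtend_of_pos (by simpa using hz), oddExtend_of_neg hz, neg_neg]
  · rw [oddExtend_of_neg (by simpa using hz), oddExtend_of_pos hz, Complex.conj_conj]

end Extension

section CauchyRiemann

variable {E : Type*} [NormedAddCommGroup E] [NormedSpace ℝ E]

def IsCauchyRiemannAt (F₁ F₂ : ℂ → E) (z : ℂ) : Prop :=
  ∃ D₁ D₂ : ℂ →L[ℝ] E, HasFDerivAt F₁ D₁ z ∧ HasFDerivAt F₂ D₂ z ∧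
    D₁ 1 = D₂ Complex.I ∧ D₁ Complex.I = -D₂ 1

variable {F₁ F₂ G₁ G₂ : ℂ → E} {z : ℂ}

theorem IsCauchyRiemannAt.congr_of_eventuallyEq (h : IsCauchyRiemannAt G₁ G₂ z)
    (h₁ : F₁ =ᶠ[𝓝 z] G₁) (h₂ : F₂ =ᶠ[𝓝 z] G₂) : IsCauchyRiemannAt F₁ F₂ z := by
  obtain ⟨D₁, D₂, hD₁, hD₂, h1, hI⟩ := h
  exact ⟨D₁, D₂, hD₁.congr_of_eventuallyEq h₁, hD₂.congr_of_eventuallyEq h₂, h1, hI⟩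

theorem IsCauchyRiemannAt.comp_conj (h : IsCauchyRiemannAt G₁ G₂ (conj z)) :
    IsCauchyRiemannAt (fun x ↦ G₁ (conj x)) (fun x ↦ -G₂ (conj x)) z := by
  obtain ⟨D₁, D₂, hD₁, hD₂, h1, hI⟩ := h
  let c : ℂ →L[ℝ] ℂ := Complex.conjCLE
  refine ⟨D₁ ∘L c, -(D₂ ∘L c), hD₁.comp z c.hasFDerivAt, (hD₂.comp z c.hasFDerivAt).neg, ?_, ?_⟩
  · simp [c, h1]
  · simp [c, hI]

theorem isCauchyRiemannAt_extend
    (h : ∀ z : ℂ, 0 < z.im → IsCauchyRiemannAt G₁ G₂ z) (hz : z.im ≠ 0) :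
    IsCauchyRiemannAt (evenExtend G₁) (oddExtend G₂) z := by
  rcases hz.lt_or_gt with hz | hz
  · have hlow : ∀ᶠ x in 𝓝 z, x.im < 0 :=
      Complex.continuous_im.continuousAt.eventually (gt_mem_nhds hz)
    exact (h (conj z) (by simpa using hz)).comp_conj.congr_of_eventuallyEq
      (hlow.mono fun x hx ↦ evenExtend_of_neg hx) (hlow.mono fun x hx ↦ oddExtend_of_neg hx)
  · have hup : ∀ᶠ x in 𝓝 z, 0 < x.im :=
      Complex.continuous_im.continuousAt.eventually (lt_mem_nhds hz)
    exact (h z hz).congr_of_eventuallyEq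
      (hup.mono fun x hx ↦ evenExtend_of_pos hx) (hup.mono fun x hx ↦ oddExtend_of_pos hx)

end CauchyRiemann

theorem slice_eq_evenExtend_add_mul_oddExtend {f : ℍ → ℍ} {G₁ G₂ : ℂ → ℍ}
    (h : ∀ z : ℂ, 0 < z.im → ∀ I : ℍ, I ^ 2 = -1 →
      f (z.re + I * z.im) = G₁ z + I * G₂ z)
    {z : ℂ} (hz : z.im ≠ 0) {I : ℍ} (hI : I ^ 2 = -1) :
    f (z.re + I * z.im) = evenExtend G₁ z + I * oddExtend G₂ z := by
  rcases hz.lt_or_gt with hz | hz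
  · have := h (conj z) (by simpa using hz) (-I) (by rwa [neg_sq])
    simp only [Complex.conj_re, Complex.conj_im, coe_neg, neg_mul_neg] at this
    rw [this, evenExtend_of_neg hz, oddExtend_of_neg hz, neg_mul, mul_neg]
  · rw [h z hz I hI, evenExtend_of_pos hz, oddExtend_of_pos hz]

attribute [local simp] Quaternion.re_mul Quaternion.imI_mul Quaternion.imJ_mul Quaternion.imK_mul

@[simp] theorem qi_re : qi.re = 0 := rfl
@[simp] theorem qi_imI : qi.imI = 1 := rfl
@[simp] theorem qi_imJ : qi.imJ = 0 := rfl
@[simp] theorem qi_imK : qi.imK = 0 := rfl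
@[simp] theorem qj_re : qj.re = 0 := rfl
@[simp] theorem qj_imI : qj.imI = 0 := rfl
@[simp] theorem qj_imJ : qj.imJ = 1 := rfl
@[simp] theorem qj_imK : qj.imK = 0 := rfl

theorem coeComplex_I : ((Complex.I : ℂ) : ℍ) = qi := rfl

theorem coeComplex_neg (x : ℂ) : ((-x : ℂ) : ℍ) = -(x : ℍ) := map_neg ofComplex x

theorem coeComplex_inv (x : ℂ) : ((x⁻¹ : ℂ) : ℍ) = (x : ℍ)⁻¹ := map_inv₀ ofComplex x

theorem coeComplex_eq_re_add_qi_mul_im (z : ℂ) : (z : ℍ) = z.re + qi * z.im := by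
  apply Quaternion.ext <;> simp

theorem coeComplex_conj_eq_re_sub_qi_mul_im (z : ℂ) :
    ((conj z : ℂ) : ℍ) = z.re - qi * z.im := by
  apply Quaternion.ext <;> simp

theorem coeComplex_commute (x y : ℂ) : Commute (x : ℍ) (y : ℍ) := by
  rw [Commute, SemiconjBy, ← coeComplex_mul, ← coeComplex_mul, mul_comm]

theorem qj_mul_coeComplex (x : ℂ) : qj * (x : ℍ) = ((conj x : ℂ) : ℍ) * qj := by
  apply Quaternion.ext <;> simp

theorem qi_mul_qi : qi * qi = -1 := by
  apply Quaternion.ext <;> simp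

theorem qj_mul_qj : qj * qj = -1 := by
  apply Quaternion.ext <;> simp

theorem qi_mul_qj_mul_qi : qi * qj * qi = qj := by
  apply Quaternion.ext <;> simp

theorem isCauchyRiemannAt_mul_qi {G : ℂ → ℍ} {D : ℂ →L[ℝ] ℍ} {z : ℂ} {m : ℍ}
    (hG : HasFDerivAt G D z) (hD : ∀ t, D t = ((conj t : ℂ) : ℍ) * m) :
    IsCauchyRiemannAt G (fun x ↦ qi * G x) z := by
  have hD1 : D 1 = m := by simp [hD]
  have hDI : D Complex.I = -(qi * m) := by
    rw [hD, Complex.conj_I, coeComplex_neg, coeComplex_I, neg_mul]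
  refine ⟨D, qi • D, hG, hG.const_mul qi, ?_, ?_⟩
  · simp [hDI, hD1, ← mul_assoc, qi_mul_qi]
  · simp [hDI, hD1]

noncomputable def coneStem (z : ℂ) : ℍ :=
  (2 : ℝ)⁻¹ • ((conj z : ℂ) - ((conj z : ℂ) : ℍ)⁻¹ * qj)

theorem isCauchyRiemannAt_coneStem {z : ℂ} (hz : z ≠ 0) :
    IsCauchyRiemannAt coneStem (fun x ↦ qi * coneStem x) z := by
  let c : ℂ →L[ℝ] ℍ :=
    ofComplex.toLinearMap.toContinuousLinearMap ∘L Complex.conjCLE.toContinuousLinearMap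
  have hc : ∀ x, c x = ((conj x : ℂ) : ℍ) := fun _ ↦ rfl
  have hinv := c.hasFDerivAt.comp z ((hasFDerivAt_inv hz).restrictScalars ℝ)
  have hderiv := (c.hasFDerivAt.sub (hinv.mul_const' qj)).const_smul (2 : ℝ)⁻¹
  refine isCauchyRiemannAt_mul_qi
    (m := (2 : ℝ)⁻¹ • (1 - ((conj (-(z ^ 2)⁻¹) : ℂ) : ℍ) * qj))
    (hderiv.congr_of_eventuallyEq (.of_forall fun x ↦ ?_)) fun t ↦ ?_
  · simp [coneStem, hc, coeComplex_inv]
  · simp [hc, mul_sub, ← mul_assoc, ← coeComplex_mul]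

theorem exists_coeComplex_eq_of_mem_span {u : ℍ} (hu : u ∈ Submodule.span ℝ {1, qi}) :
    ∃ w : ℂ, (w : ℍ) = u := by
  obtain ⟨a, b, rfl⟩ := Submodule.mem_span_pair.mp hu
  exact ⟨⟨a, b⟩, by apply Quaternion.ext <;> simp⟩

theorem one_add_mul_qj_ne_zero (w : ℂ) : 1 + (w : ℍ) * qj ≠ 0 := by
  intro h
  simpa using congrArg QuaternionAlgebra.re h

theorem one_add_mul_qj_add_qi_mul_mul_qi (w : ℂ) :
    (1 + (w : ℍ) * qj) + qi * (1 + (w : ℍ) * qj) * qi = (2 : ℝ) • ((w : ℍ) * qj) := by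
  have hcomm : qi * (w : ℍ) = w * qi := (coeComplex_commute Complex.I w).eq
  calc (1 + (w : ℍ) * qj) + qi * (1 + (w : ℍ) * qj) * qi
      = 1 + qi * qi + w * qj + (qi * w) * qj * qi := by noncomm_ring
    _ = 1 + qi * qi + w * qj + w * (qi * qj * qi) := by rw [hcomm]; noncomm_ring
    _ = (2 : ℝ) • ((w : ℍ) * qj) := by rw [qi_mul_qi, qi_mul_qj_mul_qi, two_smul]; abel

theorem mul_qj_mul_sub_inv_mul_qj (w z : ℂ) :
    (w : ℍ) * qj * ((conj z : ℂ) - ((conj z : ℂ) : ℍ)⁻¹ * qj) =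
      w * (z : ℍ)⁻¹ + (w * z) * qj := by
  calc (w : ℍ) * qj * ((conj z : ℂ) - ((conj z : ℂ) : ℍ)⁻¹ * qj)
      = w * (qj * (conj z : ℂ)) - w * (qj * ((conj z⁻¹ : ℂ) : ℍ)) * qj := by
        rw [map_inv₀, coeComplex_inv]; noncomm_ring
    _ = w * (z * qj) - w * ((z⁻¹ : ℂ) * (qj * qj)) := by
        rw [qj_mul_coeComplex, qj_mul_coeComplex, Complex.conj_conj, Complex.conj_conj]
        noncomm_ring
    _ = w * (z : ℍ)⁻¹ + (w * z) * qj := by rw [qj_mul_qj, coeComplex_inv]; noncomm_ring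

/-- **A slice regular function whose twistor lift lies on the quadratic cone
`X₁² = X₂X₃`**: the function `f(α + Iβ) = (1/2)(1 + I·i)((α - iβ) - (α - iβ)⁻¹·j)`
is slice regular, its lift satisfies `(1 + u·j)·f(α + Iβ) = u·v⁻¹ + (u·v)·j`
(`I = (1 + u·j)⁻¹·i·(1 + u·j)`, `v = α + iβ`), and the lifted point
`(1, u, u·v⁻¹, u·v)` satisfies `X₁² = X₂·X₃`. -/
theorem slice_regular_on_quadratic_cone
    (f : Quaternion ℝ → Quaternion ℝ)
    (hf : ∀ (α β : ℝ), 0 < β → ∀ I : Quaternion ℝ, I ^ 2 = -1 →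
      f ((α : Quaternion ℝ) + I * (β : Quaternion ℝ))
        = (2 : ℝ)⁻¹ • ((1 + I * qi) *
            (((α : Quaternion ℝ) - qi * (β : Quaternion ℝ))
              - ((α : Quaternion ℝ) - qi * (β : Quaternion ℝ))⁻¹ * qj))) :
    (∃ F₁ F₂ : ℂ → Quaternion ℝ,
      (∀ z : ℂ, z.im ≠ 0 →
        F₁ ((starRingEnd ℂ) z) = F₁ z ∧ F₂ ((starRingEnd ℂ) z) = - F₂ z) ∧
      (∀ z : ℂ, z.im ≠ 0 → ∀ I : Quaternion ℝ, I ^ 2 = -1 →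
        f ((z.re : Quaternion ℝ) + I * (z.im : Quaternion ℝ)) = F₁ z + I * F₂ z) ∧
      (∀ z : ℂ, z.im ≠ 0 → ∃ D₁ D₂ : ℂ →L[ℝ] Quaternion ℝ,
        HasFDerivAt F₁ D₁ z ∧ HasFDerivAt F₂ D₂ z ∧
        D₁ 1 = D₂ Complex.I ∧ D₁ Complex.I = - D₂ 1))
    ∧
    (∀ u ∈ Submodule.span ℝ ({1, qi} : Set (Quaternion ℝ)),
      ∀ z : ℂ, 0 < z.im →
        (1 + u * qj) *
            f ((z.re : Quaternion ℝ)
                + ((1 + u * qj)⁻¹ * qi * (1 + u * qj)) * (z.im : Quaternion ℝ))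
          = u * ((z.re : Quaternion ℝ) + qi * (z.im : Quaternion ℝ))⁻¹
            + (u * ((z.re : Quaternion ℝ) + qi * (z.im : Quaternion ℝ))) * qj ∧
        u ^ 2 = (u * ((z.re : Quaternion ℝ) + qi * (z.im : Quaternion ℝ))⁻¹)
            * (u * ((z.re : Quaternion ℝ) + qi * (z.im : Quaternion ℝ)))) := by
  have hslice : ∀ z : ℂ, 0 < z.im → ∀ I : ℍ, I ^ 2 = -1 →
      f (z.re + I * z.im) = coneStem z + I * (qi * coneStem z) := fun z hz I hI ↦ by
    rw [hf _ _ hz I hI, ← coeComplex_conj_eq_re_sub_qi_mul_im, smul_one_add_mul_mul, coneStem]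
  refine ⟨⟨evenExtend coneStem, oddExtend (fun x ↦ qi * coneStem x),
    fun z hz ↦ ⟨evenExtend_conj hz, oddExtend_conj hz⟩,
    fun z hz I hI ↦ slice_eq_evenExtend_add_mul_oddExtend hslice hz hI,
    fun z hz ↦ isCauchyRiemannAt_extend
      (fun x hx ↦ isCauchyRiemannAt_coneStem fun h ↦ hx.ne' (by simp [h])) hz⟩, ?_⟩
  intro u hu z hz
  obtain ⟨w, rfl⟩ := exists_coeComplex_eq_of_mem_span hu
  have hP := one_add_mul_qj_ne_zero w
  have hI : ((1 + (w : ℍ) * qj)⁻¹ * qi * (1 + (w : ℍ) * qj)) ^ 2 = -1 := by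
    rw [GroupWithZero.conj_pow₀ hP, sq, qi_mul_qi, mul_neg_one, neg_mul, inv_mul_cancel₀ hP]
  have hz0 : (z : ℍ) ≠ 0 := (map_ne_zero ofComplex).mpr fun h ↦ hz.ne' (by simp [h])
  rw [hf _ _ hz _ hI, ← coeComplex_conj_eq_re_sub_qi_mul_im, ← coeComplex_eq_re_add_qi_mul_im,
    mul_smul_one_add_conj_mul hP, one_add_mul_qj_add_qi_mul_mul_qi, smul_mul_assoc, smul_smul,
    inv_mul_cancel₀ two_ne_zero, one_smul, mul_qj_mul_sub_inv_mul_qj]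
  exact ⟨rfl, (coeComplex_commute w z).sq_eq_mul_inv_mul_mul hz0⟩
end
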